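/- Let q ≥ 3 be odd, λ ≢ 0 (mod q), 1/2 < ρ < 1, and m ≥ 1. Then ∏_{j=0}^{m-1} |ρ + (1-ρ)e^{2πi λ 2ʲ / q}| ≤ (1 - ρ(1-ρ)/q²)^m. -/

import Mathlib

/-!
Each factor has squared modulus `1 - 4ρ(1-ρ) sin²(π λ 2ʲ / q)`. Since `q` is odd, `q ∤ λ 2ʲ`, so
`λ 2ʲ / q` lies at distance at least `1/q` from the nearest integer, and Jordan's inequality
`sin x ≥ 2x/π` on `[0, π/2]` gives `sin²(π λ 2ʲ / q) ≥ 4/q²`. Hence each factor is at most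
`√(1 - 4ρ(1-ρ)/q²) ≤ 1 - ρ(1-ρ)/q²`.
-/

open Real

theorem two_mul_abs_sub_round_le_abs_sin_pi_mul (x : ℝ) :
    2 * |x - round x| ≤ |sin (π * x)| := by
  have hd : |π * (x - round x)| ≤ π / 2 := by
    rw [abs_mul, abs_of_pos pi_pos]
    nlinarith [abs_sub_round x, pi_pos]
  have hsin : |sin (π * x)| = sin |π * (x - round x)| := by
    rw [← abs_sin_eq_sin_abs_of_abs_le_pi (by linarith [pi_pos]),
      show π * x = π * (x - round x) + (round x : ℤ) * π by ring,
      sin_add_int_mul_pi, abs_mul, abs_zpow, abs_neg, abs_one, one_zpow, one_mul]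
  calc 2 * |x - round x| = 2 / π * |π * (x - round x)| := by
        rw [abs_mul, abs_of_pos pi_pos]; field_simp
    _ ≤ |sin (π * x)| := hsin ▸ mul_le_sin (abs_nonneg _) hd

theorem one_div_le_abs_div_sub_round {q : ℕ} (hq : 0 < q) {k : ℤ} (hk : ¬ (q : ℤ) ∣ k) :
    1 / (q : ℝ) ≤ |(k : ℝ) / q - round ((k : ℝ) / q)| := by
  have hqR : (0 : ℝ) < q := by exact_mod_cast hq
  have hne : k - round ((k : ℝ) / q) * q ≠ 0 := fun h => hk ⟨round ((k : ℝ) / q), by linarith⟩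
  have hone : (1 : ℝ) ≤ |((k - round ((k : ℝ) / q) * q : ℤ) : ℝ)| := by
    exact_mod_cast Int.one_le_abs hne
  rw [show (k : ℝ) / q - round ((k : ℝ) / q) = ((k - round ((k : ℝ) / q) * q : ℤ) : ℝ) / q by
      push_cast; field_simp, abs_div, abs_of_pos hqR]
  gcongr

theorem sq_norm_add_one_sub_mul_exp (t θ : ℝ) :
    ‖(t : ℂ) + (1 - t) * Complex.exp (θ * Complex.I)‖ ^ 2
      = 1 - 4 * t * (1 - t) * sin (θ / 2) ^ 2 := by
  have h : (t : ℂ) + (1 - t) * Complex.exp (θ * Complex.I)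
      = ((t + (1 - t) * cos θ : ℝ) : ℂ) + ((1 - t) * sin θ : ℝ) * Complex.I := by
    rw [Complex.exp_mul_I, ← Complex.ofReal_cos, ← Complex.ofReal_sin]
    push_cast; ring
  have hcos : cos θ = 1 - 2 * sin (θ / 2) ^ 2 := by
    rw [← cos_two_mul_eq_one_sub, mul_div_cancel₀ θ two_ne_zero]
  rw [h, Complex.norm_add_mul_I, sq_sqrt (by positivity)]
  linear_combination (1 - t) ^ 2 * sin_sq_add_cos_sq θ + 2 * t * (1 - t) * hcos

theorem norm_add_one_sub_mul_exp_le {q : ℕ} (hq : 0 < q) {k : ℤ} (hk : ¬ (q : ℤ) ∣ k)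
    {ρ : ℝ} (hρ0 : 0 ≤ ρ) (hρ1 : ρ ≤ 1) :
    ‖(ρ : ℂ) + (1 - ρ) * Complex.exp (2 * π * Complex.I * k / q)‖ ≤ 1 - ρ * (1 - ρ) / q ^ 2 := by
  have hqR : (1 : ℝ) ≤ q := by exact_mod_cast hq
  have hsin : 4 / (q : ℝ) ^ 2 ≤ sin (π * k / q) ^ 2 := by
    have := (two_mul_abs_sub_round_le_abs_sin_pi_mul ((k : ℝ) / q)).trans'
      (mul_le_mul_of_nonneg_left (one_div_le_abs_div_sub_round hq hk) zero_le_two)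
    calc 4 / (q : ℝ) ^ 2 = (2 * (1 / q)) ^ 2 := by ring
      _ ≤ |sin (π * (k / q))| ^ 2 := pow_le_pow_left₀ (by positivity) this 2
      _ = sin (π * k / q) ^ 2 := by rw [sq_abs, mul_div_assoc]
  have hnorm := sq_norm_add_one_sub_mul_exp ρ (2 * π * k / q)
  rw [show ((2 * π * k / q : ℝ) : ℂ) * Complex.I = 2 * π * Complex.I * k / q by push_cast; ring,
    show 2 * π * k / q / 2 = π * k / q by ring] at hnorm
  have hρρ : 0 ≤ ρ * (1 - ρ) := mul_nonneg hρ0 (by linarith)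
  set a := ρ * (1 - ρ) / q ^ 2
  have ha : 0 ≤ a := by positivity
  have ha1 : a ≤ 1 := by
    rw [div_le_one (by positivity)]; nlinarith [one_le_pow₀ (n := 2) hqR]
  have h4a : 4 * a ≤ ρ * (1 - ρ) * sin (π * k / q) ^ 2 := by
    calc 4 * a = ρ * (1 - ρ) * (4 / q ^ 2) := by ring
      _ ≤ ρ * (1 - ρ) * sin (π * k / q) ^ 2 := mul_le_mul_of_nonneg_left hsin hρρ
  apply le_of_sq_le_sq _ (by linarith)
  rw [hnorm]
  nlinarith

theorem stmt_8_general (q : ℕ) (hodd : Odd q) (l : ℤ) (hl : ¬ ((q : ℤ) ∣ l))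
    (ρ : ℝ) (hρ : 1 / 2 < ρ) (hρ1 : ρ < 1) (m : ℕ) :
    ∏ j ∈ Finset.range m,
        ‖(ρ : ℂ) + (1 - ρ) * Complex.exp (2 * Real.pi * Complex.I * l * 2 ^ j / q)‖
      ≤ (1 - ρ * (1 - ρ) / q ^ 2) ^ m := by
  have hcop : IsCoprime (q : ℤ) 2 := Nat.isCoprime_iff_coprime.mpr hodd.coprime_two_right
  have hfactor : ∀ j ∈ Finset.range m,
      ‖(ρ : ℂ) + (1 - ρ) * Complex.exp (2 * Real.pi * Complex.I * l * 2 ^ j / q)‖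
        ≤ 1 - ρ * (1 - ρ) / q ^ 2 := by
    intro j _
    have hk : ¬ (q : ℤ) ∣ l * 2 ^ j := fun h => hl (hcop.pow_right.dvd_of_dvd_mul_right h)
    have := norm_add_one_sub_mul_exp_le hodd.pos hk (by linarith) hρ1.le
    push_cast at this
    simpa only [mul_assoc] using this
  simpa only [Finset.prod_const, Finset.card_range] using
    Finset.prod_le_prod (fun _ _ => norm_nonneg _) hfactor

theorem stmt_8 (q : ℕ) (hq : 3 ≤ q) (hodd : Odd q) (l : ℤ) (hl : ¬ ((q : ℤ) ∣ l))
    (ρ : ℝ) (hρ : 1 / 2 < ρ) (hρ1 : ρ < 1) (m : ℕ) (hm : 1 ≤ m) :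
    ∏ j ∈ Finset.range m,
        ‖(ρ : ℂ) + (1 - ρ) * Complex.exp (2 * Real.pi * Complex.I * l * 2 ^ j / q)‖
      ≤ (1 - ρ * (1 - ρ) / q ^ 2) ^ m :=
  stmt_8_general q hodd l hl ρ hρ hρ1 m
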